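/- Let A be a unital C*-algebra and a, b ∈ A. Set R_a = (1 + a*a)⁻¹, R_{a*} = (1 + aa*)⁻¹ and similarly for b, and let d(a,b) = max{‖R_a − R_b‖, ‖R_{a*} − R_{b*}‖, ‖aR_a − bR_b‖}. Then [(1 + ‖a‖²)(1 + ‖b‖)]⁻¹·‖a − b‖ ≤ d(a,b) ≤ max{‖a‖ + ‖b‖, 1 + ‖b‖(‖a‖ + ‖b‖)}·‖a − b‖. -/

import Mathlib

/-!
The resolvents `R_a = (1 + a⋆a)⁻¹` and `R_{a⋆} = (1 + aa⋆)⁻¹` have norm at most one, and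
they intertwine `a`: `R_{a⋆} a = a R_a`. The resolvent identity
`R_a - R_b = R_a (b⋆b - a⋆a) R_b` then gives the Lipschitz bounds, and
`a R_a - b R_b = R_{a⋆} (a - b) + (R_{a⋆} - R_{b⋆}) b` gives both the bound on the third term
and, after multiplying by `1 + aa⋆`, the lower bound.
-/

section Ring

variable {R : Type*} [Ring R]

lemma Ring.inverse_one_add_mul_mul {x y : R} (hxy : IsUnit (1 + x * y))
    (hyx : IsUnit (1 + y * x)) :
    Ring.inverse (1 + x * y) * x = x * Ring.inverse (1 + y * x) := by
  calc Ring.inverse (1 + x * y) * x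
      = Ring.inverse (1 + x * y) * (x * (1 + y * x)) * Ring.inverse (1 + y * x) := by
        rw [mul_assoc, mul_assoc, Ring.mul_inverse_cancel _ hyx, mul_one]
    _ = Ring.inverse (1 + x * y) * (1 + x * y) * (x * Ring.inverse (1 + y * x)) := by
        noncomm_ring
    _ = x * Ring.inverse (1 + y * x) := by rw [Ring.inverse_mul_cancel _ hxy, one_mul]

end Ring

lemma norm_mul_mul_le_of_norm_le_one {R : Type*} [NonUnitalSeminormedRing R] {r s : R} (x : R)
    (hr : ‖r‖ ≤ 1) (hs : ‖s‖ ≤ 1) : ‖r * x * s‖ ≤ ‖x‖ :=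
  calc ‖r * x * s‖ ≤ ‖r‖ * ‖x‖ * ‖s‖ := norm_mul₃_le
    _ ≤ 1 * ‖x‖ * 1 := by gcongr
    _ = ‖x‖ := by ring

section CStarAlgebra

variable {A : Type*} [CStarAlgebra A]

section Order

variable [PartialOrder A] [StarOrderedRing A]

lemma isUnit_one_add_of_nonneg {x : A} (hx : 0 ≤ x) : IsUnit (1 + x) :=
  CStarAlgebra.isUnit_of_le 1 (le_add_of_nonneg_right hx)

lemma norm_inverse_one_add_le_one_of_nonneg {x : A} (hx : 0 ≤ x) :
    ‖Ring.inverse (1 + x)‖ ≤ 1 := by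
  have h1 : 1 ≤ 1 + x := le_add_of_nonneg_right hx
  lift 1 + x to Aˣ using isUnit_one_add_of_nonneg hx with u
  rw [Ring.inverse_unit, CStarAlgebra.norm_le_one_iff_of_nonneg _
    (CFC.inv_nonneg_of_nonneg u (zero_le_one.trans h1))]
  exact CStarAlgebra.inv_le_one h1

end Order

lemma isUnit_one_add_star_mul_self (a : A) : IsUnit (1 + star a * a) :=
  letI := CStarAlgebra.spectralOrder A
  letI := CStarAlgebra.spectralOrderedRing A
  isUnit_one_add_of_nonneg (star_mul_self_nonneg a)

lemma norm_inverse_one_add_star_mul_self_le_one (a : A) :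
    ‖Ring.inverse (1 + star a * a)‖ ≤ 1 :=
  letI := CStarAlgebra.spectralOrder A
  letI := CStarAlgebra.spectralOrderedRing A
  norm_inverse_one_add_le_one_of_nonneg (star_mul_self_nonneg a)

lemma isUnit_one_add_mul_star_self (a : A) : IsUnit (1 + a * star a) := by
  simpa only [star_star] using isUnit_one_add_star_mul_self (star a)

lemma norm_inverse_one_add_mul_star_self_le_one (a : A) :
    ‖Ring.inverse (1 + a * star a)‖ ≤ 1 := by
  simpa only [star_star] using norm_inverse_one_add_star_mul_self_le_one (star a)

lemma inverse_one_add_mul_star_self_mul (a : A) :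
    Ring.inverse (1 + a * star a) * a = a * Ring.inverse (1 + star a * a) :=
  Ring.inverse_one_add_mul_mul (isUnit_one_add_mul_star_self a) (isUnit_one_add_star_mul_self a)

lemma norm_inverse_one_add_star_mul_self_sub_le (a b : A) :
    ‖Ring.inverse (1 + star a * a) - Ring.inverse (1 + star b * b)‖ ≤
      (‖a‖ + ‖b‖) * ‖a - b‖ := by
  set ra := Ring.inverse (1 + star a * a)
  set rb := Ring.inverse (1 + star b * b)
  have nra : ‖ra‖ ≤ 1 := norm_inverse_one_add_star_mul_self_le_one a
  have nrb : ‖rb‖ ≤ 1 := norm_inverse_one_add_star_mul_self_le_one b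
  have split : ra - rb = ra * (star b * (b - a)) * rb + ra * (star (b - a) * a) * rb := by
    rw [Ring.inverse_sub_inverse (by simp only [isUnit_one_add_star_mul_self]), star_sub]
    noncomm_ring
  calc ‖ra - rb‖ ≤ ‖star b * (b - a)‖ + ‖star (b - a) * a‖ := by
        rw [split]
        exact (norm_add_le _ _).trans (add_le_add (norm_mul_mul_le_of_norm_le_one _ nra nrb)
          (norm_mul_mul_le_of_norm_le_one _ nra nrb))
    _ ≤ ‖b‖ * ‖a - b‖ + ‖a - b‖ * ‖a‖ := by
        rw [norm_sub_rev a b]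
        gcongr <;> refine (norm_mul_le _ _).trans_eq ?_ <;> rw [norm_star]
    _ = (‖a‖ + ‖b‖) * ‖a - b‖ := by ring

lemma norm_inverse_one_add_mul_star_self_sub_le (a b : A) :
    ‖Ring.inverse (1 + a * star a) - Ring.inverse (1 + b * star b)‖ ≤
      (‖a‖ + ‖b‖) * ‖a - b‖ := by
  simpa [← star_sub] using norm_inverse_one_add_star_mul_self_sub_le (star a) (star b)

lemma mul_inverse_one_add_star_mul_self_sub (a b : A) :
    a * Ring.inverse (1 + star a * a) - b * Ring.inverse (1 + star b * b) =
      Ring.inverse (1 + a * star a) * (a - b) +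
        (Ring.inverse (1 + a * star a) - Ring.inverse (1 + b * star b)) * b := by
  rw [← inverse_one_add_mul_star_self_mul, ← inverse_one_add_mul_star_self_mul]
  noncomm_ring

lemma norm_mul_inverse_one_add_star_mul_self_sub_le (a b : A) :
    ‖a * Ring.inverse (1 + star a * a) - b * Ring.inverse (1 + star b * b)‖ ≤
      (1 + ‖b‖ * (‖a‖ + ‖b‖)) * ‖a - b‖ := by
  rw [mul_inverse_one_add_star_mul_self_sub]
  calc _ ≤ ‖Ring.inverse (1 + a * star a)‖ * ‖a - b‖ +
        ‖Ring.inverse (1 + a * star a) - Ring.inverse (1 + b * star b)‖ * ‖b‖ :=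
        (norm_add_le _ _).trans (add_le_add (norm_mul_le _ _) (norm_mul_le _ _))
    _ ≤ 1 * ‖a - b‖ + (‖a‖ + ‖b‖) * ‖a - b‖ * ‖b‖ := by
        gcongr
        · exact norm_inverse_one_add_mul_star_self_le_one a
        · exact norm_inverse_one_add_mul_star_self_sub_le a b
    _ = (1 + ‖b‖ * (‖a‖ + ‖b‖)) * ‖a - b‖ := by ring

lemma norm_sub_le_one_add_norm_sq_mul (a b : A) :
    ‖a - b‖ ≤ (1 + ‖a‖ ^ 2) *
      (‖a * Ring.inverse (1 + star a * a) - b * Ring.inverse (1 + star b * b)‖ +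
        ‖Ring.inverse (1 + a * star a) - Ring.inverse (1 + b * star b)‖ * ‖b‖) := by
  have hsub : a - b = (1 + a * star a) *
      ((a * Ring.inverse (1 + star a * a) - b * Ring.inverse (1 + star b * b)) -
        (Ring.inverse (1 + a * star a) - Ring.inverse (1 + b * star b)) * b) := by
    rw [mul_inverse_one_add_star_mul_self_sub, add_sub_cancel_right, ← mul_assoc,
      Ring.mul_inverse_cancel _ (isUnit_one_add_mul_star_self a), one_mul]
  have hnorm : ‖1 + a * star a‖ ≤ 1 + ‖a‖ ^ 2 := by
    nontriviality A
    rw [sq, ← CStarRing.norm_self_mul_star, ← CStarRing.norm_one (E := A)]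
    exact norm_add_le _ _
  calc ‖a - b‖ ≤ ‖1 + a * star a‖ * ‖(a * Ring.inverse (1 + star a * a) -
          b * Ring.inverse (1 + star b * b)) -
          (Ring.inverse (1 + a * star a) - Ring.inverse (1 + b * star b)) * b‖ := by
        rw [hsub]
        exact norm_mul_le _ _
    _ ≤ _ := by
        gcongr
        exact (norm_sub_le _ _).trans (add_le_add_right (norm_mul_le _ _) _)

end CStarAlgebra

/-- Let `A` be a unital C*-algebra and `a, b ∈ A`. Set `R_a = (1 + a*a)⁻¹`,
`R_{a*} = (1 + aa*)⁻¹` and similarly for `b`, and let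
`d(a,b) = max{‖R_a − R_b‖, ‖R_{a*} − R_{b*}‖, ‖aR_a − bR_b‖}`. Then
`[(1 + ‖a‖²)(1 + ‖b‖)]⁻¹·‖a − b‖ ≤ d(a,b)` and
`d(a,b) ≤ max{‖a‖ + ‖b‖, 1 + ‖b‖(‖a‖ + ‖b‖)}·‖a − b‖`. -/
theorem stmt_9 {A : Type*} [CStarAlgebra A] (a b : A) :
    ((1 + ‖a‖ ^ 2) * (1 + ‖b‖))⁻¹ * ‖a - b‖ ≤
      max (max ‖Ring.inverse (1 + star a * a) - Ring.inverse (1 + star b * b)‖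
            ‖Ring.inverse (1 + a * star a) - Ring.inverse (1 + b * star b)‖)
        ‖a * Ring.inverse (1 + star a * a) - b * Ring.inverse (1 + star b * b)‖ ∧
    max (max ‖Ring.inverse (1 + star a * a) - Ring.inverse (1 + star b * b)‖
          ‖Ring.inverse (1 + a * star a) - Ring.inverse (1 + b * star b)‖)
        ‖a * Ring.inverse (1 + star a * a) - b * Ring.inverse (1 + star b * b)‖ ≤
      max (‖a‖ + ‖b‖) (1 + ‖b‖ * (‖a‖ + ‖b‖)) * ‖a - b‖ := by
  set d₂ := ‖Ring.inverse (1 + a * star a) - Ring.inverse (1 + b * star b)‖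
  set d₃ := ‖a * Ring.inverse (1 + star a * a) - b * Ring.inverse (1 + star b * b)‖
  set d := max (max ‖Ring.inverse (1 + star a * a) - Ring.inverse (1 + star b * b)‖ d₂) d₃
  constructor
  · have h₂ : d₂ ≤ d := (le_max_right _ _).trans (le_max_left _ _)
    have h₃ : d₃ ≤ d := le_max_right _ _
    rw [inv_mul_le_iff₀ (by positivity)]
    calc ‖a - b‖ ≤ (1 + ‖a‖ ^ 2) * (d₃ + d₂ * ‖b‖) := norm_sub_le_one_add_norm_sq_mul a b
      _ ≤ (1 + ‖a‖ ^ 2) * (d + d * ‖b‖) := by gcongr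
      _ = (1 + ‖a‖ ^ 2) * (1 + ‖b‖) * d := by ring
  · have hM₁ : ‖a‖ + ‖b‖ ≤ max (‖a‖ + ‖b‖) (1 + ‖b‖ * (‖a‖ + ‖b‖)) := le_max_left _ _
    have hM₂ : 1 + ‖b‖ * (‖a‖ + ‖b‖) ≤ max (‖a‖ + ‖b‖) (1 + ‖b‖ * (‖a‖ + ‖b‖)) :=
      le_max_right _ _
    refine max_le (max_le ?_ ?_) ?_
    · exact (norm_inverse_one_add_star_mul_self_sub_le a b).trans (by gcongr)
    · exact (norm_inverse_one_add_mul_star_self_sub_le a b).trans (by gcongr)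
    · exact (norm_mul_inverse_one_add_star_mul_self_sub_le a b).trans (by gcongr)
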